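/- Let H, W be real Hilbert spaces, K ⊆ H nonempty closed convex, ω > 0, A, A_h : H → W bounded linear, b ∈ W. Let u minimize J(v) = (1/2)‖A v - b‖² + (ω/2)‖v‖² over K and u_h minimize J_h(v) = (1/2)‖A_h v - b‖² + (ω/2)‖v‖² over K. Then ω‖u - u_h‖² + (1/2)‖A u - A_h u_h‖² ≤ (1/2)‖A u - A_h u‖² + ‖(A_h* - A*)(A u - b)‖ · ‖u - u_h‖. -/

import Mathlib

/-!
Both minimizers satisfy the first-order optimality condition of their functional on `K`:
`⟪A u - b, A (v - u)⟫ + ω ⟪u, v - u⟫ ≥ 0` for all `v ∈ K`, and likewise for `A_h`, `u_h`.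
Testing the first with `v = u_h`, the second with `v = u` and adding gives
`ω ‖u - u_h‖² ≤ ⟪(A_h* - A*)(A u - b), u - u_h⟫ + ⟪e, d - e⟫` with `e = A u - A_h u_h` and
`d = A u - A_h u`; Cauchy–Schwarz and `⟪e, d - e⟫ ≤ (‖d‖² - ‖e‖²) / 2` finish the estimate.
-/

open scoped RealInnerProductSpace

section TikhonovFunctional

variable {H W : Type*} [NormedAddCommGroup H] [InnerProductSpace ℝ H]
  [NormedAddCommGroup W] [InnerProductSpace ℝ W]

noncomputable def tikhonovFunctional (A : H →L[ℝ] W) (b : W) (ω : ℝ) (v : H) : ℝ :=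
  (1/2) * ‖A v - b‖^2 + (ω/2) * ‖v‖^2

theorem hasFDerivAt_tikhonovFunctional (A : H →L[ℝ] W) (b : W) (ω : ℝ) (u : H) :
    HasFDerivAt (tikhonovFunctional A b ω) ((innerSL ℝ (A u - b)).comp A + ω • innerSL ℝ u) u := by
  have hres : HasFDerivAt (fun v => A v - b) A u := A.hasFDerivAt.sub_const b
  refine ((hres.norm_sq.const_mul (1/2)).add
    ((hasStrictFDerivAt_norm_sq u).hasFDerivAt.const_mul (ω/2))).congr_fderiv ?_
  ext v
  simp only [add_apply, smul_apply, ContinuousLinearMap.comp_apply, coe_innerSL_apply,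
    nsmul_eq_mul, smul_eq_mul]
  ring

theorem tikhonov_variational_inequality {A : H →L[ℝ] W} {b : W} {ω : ℝ} {K : Set H} {u v : H}
    (hK : Convex ℝ K) (hmin : IsMinOn (tikhonovFunctional A b ω) K u) (hu : u ∈ K) (hv : v ∈ K) :
    0 ≤ ⟪A u - b, A (v - u)⟫ + ω * ⟪u, v - u⟫ := by
  have hcone : v - u ∈ posTangentConeAt K u :=
    sub_mem_posTangentConeAt_of_segment_subset (hK.segment_subset hu hv)
  simpa only [add_apply, smul_apply, ContinuousLinearMap.comp_apply, coe_innerSL_apply,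
    smul_eq_mul] using hmin.localize.hasFDerivWithinAt_nonneg
      (hasFDerivAt_tikhonovFunctional A b ω u).hasFDerivWithinAt hcone

theorem real_inner_sub_self_le (x y : W) : ⟪x, y - x⟫ ≤ (‖y‖^2 - ‖x‖^2) / 2 := by
  have hpolar := norm_sub_sq_real y x
  rw [inner_sub_right, real_inner_self_eq_norm_sq, real_inner_comm]
  nlinarith [sq_nonneg ‖y - x‖]

end TikhonovFunctional

theorem stmt_6_general {H W : Type*} [NormedAddCommGroup H] [InnerProductSpace ℝ H] [CompleteSpace H]
    [NormedAddCommGroup W] [InnerProductSpace ℝ W] [CompleteSpace W]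
    (K : Set H) (hKcv : Convex ℝ K)
    (ω : ℝ) (A Ah : H →L[ℝ] W) (b : W)
    (u uh : H) (hu : u ∈ K) (huh : uh ∈ K)
    (hmin : ∀ v ∈ K, (1/2) * ‖A u - b‖^2 + (ω/2) * ‖u‖^2 ≤ (1/2) * ‖A v - b‖^2 + (ω/2) * ‖v‖^2)
    (hminh : ∀ v ∈ K, (1/2) * ‖Ah uh - b‖^2 + (ω/2) * ‖uh‖^2 ≤ (1/2) * ‖Ah v - b‖^2 + (ω/2) * ‖v‖^2) :
    ω * ‖u - uh‖^2 + (1/2) * ‖A u - Ah uh‖^2 ≤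
      (1/2) * ‖A u - Ah u‖^2 +
        ‖(ContinuousLinearMap.adjoint Ah - ContinuousLinearMap.adjoint A) (A u - b)‖ * ‖u - uh‖ := by
  have hvi := tikhonov_variational_inequality hKcv (isMinOn_iff.2 hmin) hu huh
  have hvih := tikhonov_variational_inequality hKcv (isMinOn_iff.2 hminh) huh hu
  have hsum_ω : ω * ⟪u, uh - u⟫ + ω * ⟪uh, u - uh⟫ = -(ω * ‖u - uh‖^2) := by
    rw [← real_inner_self_eq_norm_sq]
    simp only [inner_sub_left, inner_sub_right, real_inner_comm uh u]
    ring
  have hsum_A : ⟪A u - b, A (uh - u)⟫ + ⟪Ah uh - b, Ah (u - uh)⟫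
      = ⟪(ContinuousLinearMap.adjoint Ah - ContinuousLinearMap.adjoint A) (A u - b), u - uh⟫
        + ⟪A u - Ah uh, (A u - Ah u) - (A u - Ah uh)⟫ := by
    simp only [map_sub, sub_apply, inner_sub_left, inner_sub_right,
      ContinuousLinearMap.adjoint_inner_left]
    ring
  calc ω * ‖u - uh‖^2 + (1/2) * ‖A u - Ah uh‖^2
      ≤ ⟪(ContinuousLinearMap.adjoint Ah - ContinuousLinearMap.adjoint A) (A u - b), u - uh⟫
        + ⟪A u - Ah uh, (A u - Ah u) - (A u - Ah uh)⟫ + (1/2) * ‖A u - Ah uh‖^2 := by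
        linarith
    _ ≤ ‖(ContinuousLinearMap.adjoint Ah - ContinuousLinearMap.adjoint A) (A u - b)‖ * ‖u - uh‖
        + (‖A u - Ah u‖^2 - ‖A u - Ah uh‖^2) / 2 + (1/2) * ‖A u - Ah uh‖^2 := by
        gcongr
        · exact real_inner_le_norm _ _
        · exact real_inner_sub_self_le _ _
    _ = _ := by ring

theorem stmt_6 {H W : Type*} [NormedAddCommGroup H] [InnerProductSpace ℝ H] [CompleteSpace H]
    [NormedAddCommGroup W] [InnerProductSpace ℝ W] [CompleteSpace W]
    (K : Set H) (hKne : K.Nonempty) (hKcl : IsClosed K) (hKcv : Convex ℝ K)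
    (ω : ℝ) (hω : 0 < ω) (A Ah : H →L[ℝ] W) (b : W)
    (u uh : H) (hu : u ∈ K) (huh : uh ∈ K)
    (hmin : ∀ v ∈ K, (1/2) * ‖A u - b‖^2 + (ω/2) * ‖u‖^2 ≤ (1/2) * ‖A v - b‖^2 + (ω/2) * ‖v‖^2)
    (hminh : ∀ v ∈ K, (1/2) * ‖Ah uh - b‖^2 + (ω/2) * ‖uh‖^2 ≤ (1/2) * ‖Ah v - b‖^2 + (ω/2) * ‖v‖^2) :
    ω * ‖u - uh‖^2 + (1/2) * ‖A u - Ah uh‖^2 ≤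
      (1/2) * ‖A u - Ah u‖^2 +
        ‖(ContinuousLinearMap.adjoint Ah - ContinuousLinearMap.adjoint A) (A u - b)‖ * ‖u - uh‖ :=
  stmt_6_general K hKcv ω A Ah b u uh hu huh hmin hminh
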